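/- Variation of the F-functional in the time parameter (the h-term of the first variation formula, Lemma 3.1 of the paper, with the submanifold and base point held fixed): let n be a natural number and let μ be a Borel measure on a finite-dimensional Euclidean space E with polynomial volume growth, i.e. there exist C > 0 and d ≥ 0 with μ(B(0,r)) ≤ C r^d for all r ≥ 1. Then for every fixed x₀ ∈ E, the function t ↦ F^{(n)}_{x₀,t}(μ) is differentiable on (0, ∞), and its derivative at t₀ > 0 equals (4π t₀)^{−n/2} ∫_E ( ‖x − x₀‖² / (4 t₀²) − n / (2 t₀) ) exp( −‖x − x₀‖² / (4 t₀) ) dμ(x). -/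

import Mathlib

/-!
Polynomial volume growth makes every Gaussian `exp (-b ‖x - x₀‖²)` integrable: on the shell
`k ≤ ‖x - x₀‖ < k + 1` the Gaussian is at most `exp (-b k)` and the shell has measure
`O((k + 1) ^ d)`, and `∑ (k + 1) ^ d exp (-b k) < ∞`. For `|t - t₀| < t₀ / 2` the `t`-derivative
`‖x - x₀‖² / (4t²) · exp (-‖x - x₀‖² / (4t))` of the integrand is dominated by a multiple of one
such Gaussian, so we may differentiate under the integral sign; the product rule with
`d/dt (4πt)^(-n/2) = -(n / 2t) (4πt)^(-n/2)` gives the formula.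
-/

open MeasureTheory Real

/-- The (real-valued) `F`-functional with dimension parameter `n` of a Borel measure `μ`
on a finite-dimensional Euclidean space `E`:
`F^{(n)}_{x₀,t₀}(μ) = (4π t₀)^{-n/2} ∫_E exp(-‖x-x₀‖²/(4t₀)) dμ(x)`. -/
noncomputable def FmeasR (n : ℕ) {E : Type*} [NormedAddCommGroup E] [InnerProductSpace ℝ E]
    [MeasurableSpace E] (μ : Measure E) (x₀ : E) (t₀ : ℝ) : ℝ :=
  (4 * Real.pi * t₀) ^ (-(n : ℝ) / 2) *
    ∫ x, Real.exp (-‖x - x₀‖ ^ 2 / (4 * t₀)) ∂μ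

open Metric
open scoped ENNReal

section PolynomialGrowth

variable {E : Type*} [NormedAddCommGroup E] [MeasurableSpace E] {μ : Measure E}

theorem measure_closedBall_le_of_measure_closedBall_zero_le {C d : ℝ} (hC : 0 ≤ C) (hd : 0 ≤ d)
    (hgrowth : ∀ r : ℝ, 1 ≤ r → μ (closedBall 0 r) ≤ ENNReal.ofReal (C * r ^ d)) (a : E) :
    ∀ r : ℝ, 1 ≤ r → μ (closedBall a r) ≤ ENNReal.ofReal (C * (1 + ‖a‖) ^ d * r ^ d) := by
  intro r hr
  calc μ (closedBall a r) ≤ μ (closedBall 0 (r + ‖a‖)) :=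
        measure_mono (closedBall_subset_closedBall' (by rw [dist_zero_right]))
    _ ≤ ENNReal.ofReal (C * (r + ‖a‖) ^ d) := hgrowth _ (by linarith [norm_nonneg a])
    _ ≤ ENNReal.ofReal (C * (1 + ‖a‖) ^ d * r ^ d) := by
        rw [mul_assoc, ← mul_rpow (by positivity) (by positivity)]
        gcongr
        nlinarith [norm_nonneg a]

theorem lintegral_le_tsum_mul_measure_closedBall [OpensMeasurableSpace E] (a : E)
    {f : E → ℝ≥0∞} {g : ℕ → ℝ≥0∞} (hfg : ∀ x, f x ≤ g ⌊‖x - a‖⌋₊) :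
    ∫⁻ x, f x ∂μ ≤ ∑' k : ℕ, g k * μ (closedBall a (k + 1)) := by
  set shell : ℕ → Set E := fun k => (fun x => ⌊‖x - a‖⌋₊) ⁻¹' {k}
  have hshell : ∀ k, MeasurableSet (shell k) := fun k =>
    (by fun_prop : Continuous fun x => ‖x - a‖).measurable.nat_floor (measurableSet_singleton k)
  have hcover : ⋃ k, shell k = Set.univ := by
    ext x
    simp [shell]
  calc ∫⁻ x, f x ∂μ = ∫⁻ x in ⋃ k, shell k, f x ∂μ := by rw [hcover, Measure.restrict_univ]
    _ ≤ ∑' k, ∫⁻ x in shell k, f x ∂μ := lintegral_iUnion_le _ _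
    _ ≤ ∑' k, ∫⁻ _ in shell k, g k ∂μ := ENNReal.tsum_le_tsum fun k =>
        setLIntegral_mono' (hshell k) fun x hx => hx ▸ hfg x
    _ = ∑' k, g k * μ (shell k) := by simp only [setLIntegral_const]
    _ ≤ ∑' k : ℕ, g k * μ (closedBall a (k + 1)) := by
        refine ENNReal.tsum_le_tsum fun k => ?_
        gcongr
        intro x hx
        rw [mem_closedBall, dist_eq_norm, ← hx]
        exact (Nat.lt_floor_add_one _).le

theorem summable_add_one_rpow_mul_exp_neg_nat_mul (d : ℝ) {b : ℝ} (hb : 0 < b) :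
    Summable fun k : ℕ => ((k : ℝ) + 1) ^ d * exp (-b * k) := by
  have hshift := ((summable_nat_add_iff 1).2
    (summable_pow_mul_exp_neg_nat_mul ⌈d⌉₊ hb)).mul_right (exp b)
  refine hshift.of_nonneg_of_le (fun k => by positivity) fun k => ?_
  have hpow : ((k : ℝ) + 1) ^ d ≤ ((k : ℝ) + 1) ^ ⌈d⌉₊ := by
    rw [← rpow_natCast]
    exact rpow_le_rpow_of_exponent_le (by linarith [k.cast_nonneg (α := ℝ)]) (Nat.le_ceil d)
  calc ((k : ℝ) + 1) ^ d * exp (-b * k) ≤ ((k : ℝ) + 1) ^ ⌈d⌉₊ * exp (-b * k) := by gcongr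
    _ = ((k + 1 : ℕ) : ℝ) ^ ⌈d⌉₊ * exp (-b * (k + 1 : ℕ)) * exp b := by
        push_cast
        rw [mul_assoc, ← exp_add]
        ring_nf

theorem integrable_exp_neg_mul_norm_sub_sq [OpensMeasurableSpace E] {a : E} {C d b : ℝ}
    (hb : 0 < b) (hgrowth : ∀ r : ℝ, 1 ≤ r → μ (closedBall a r) ≤ ENNReal.ofReal (C * r ^ d)) :
    Integrable (fun x => exp (-b * ‖x - a‖ ^ 2)) μ := by
  refine ⟨(by fun_prop : Continuous _).aestronglyMeasurable, ?_⟩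
  rw [hasFiniteIntegral_iff_ofReal (ae_of_all _ fun x => (exp_pos _).le)]
  have hdecay : ∀ x, ENNReal.ofReal (exp (-b * ‖x - a‖ ^ 2))
      ≤ ENNReal.ofReal (exp (-b * ⌊‖x - a‖⌋₊)) := fun x => by
    have hfloor : (⌊‖x - a‖⌋₊ : ℝ) ≤ ‖x - a‖ := Nat.floor_le (norm_nonneg _)
    have hsq : (⌊‖x - a‖⌋₊ : ℝ) ≤ ‖x - a‖ ^ 2 := calc
      (⌊‖x - a‖⌋₊ : ℝ) ≤ (⌊‖x - a‖⌋₊ : ℝ) ^ 2 := by exact_mod_cast Nat.le_self_pow two_ne_zero _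
      _ ≤ ‖x - a‖ ^ 2 := by gcongr
    exact ENNReal.ofReal_le_ofReal (exp_le_exp.2 (by nlinarith))
  calc ∫⁻ x, ENNReal.ofReal (exp (-b * ‖x - a‖ ^ 2)) ∂μ
      ≤ ∑' k : ℕ, ENNReal.ofReal (exp (-b * k)) * μ (closedBall a (k + 1)) :=
        lintegral_le_tsum_mul_measure_closedBall a hdecay
    _ ≤ ∑' k : ℕ, ENNReal.ofReal (C * (((k : ℝ) + 1) ^ d * exp (-b * k))) := by
        refine ENNReal.tsum_le_tsum fun k => ?_
        rw [← mul_assoc, ENNReal.ofReal_mul' (exp_pos _).le, mul_comm]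
        gcongr
        exact hgrowth _ (by linarith [k.cast_nonneg (α := ℝ)])
    _ < ⊤ := ((summable_add_one_rpow_mul_exp_neg_nat_mul d hb).mul_left C).tsum_ofReal_lt_top

end PolynomialGrowth

theorem hasDerivAt_exp_neg_div_four_mul (s : ℝ) {t : ℝ} (ht : t ≠ 0) :
    HasDerivAt (fun t => exp (-s / (4 * t))) (s / (4 * t ^ 2) * exp (-s / (4 * t))) t := by
  convert ((hasDerivAt_inv ht).const_mul (-s / 4)).exp using 1
  · ext u
    ring_nf
  · field_simp

theorem div_four_mul_sq_mul_exp_neg_div_le {s t t₀ : ℝ} (hs : 0 ≤ s) (ht₀ : 0 < t₀) (ht : |t - t₀| < t₀ / 2) :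
    s / (4 * t ^ 2) * exp (-s / (4 * t)) ≤ 12 / t₀ * exp (-s / (12 * t₀)) := by
  obtain ⟨htl, htu⟩ := abs_lt.1 ht
  have ht : 0 < t := by linarith
  have hfactor : s / (4 * t ^ 2) ≤ s / t₀ ^ 2 :=
    div_le_div_of_nonneg_left hs (by positivity) (by nlinarith)
  have hexp : exp (-s / (4 * t)) ≤ exp (-s / (6 * t₀)) := by
    rw [exp_le_exp, neg_div, neg_div, neg_le_neg_iff]
    exact div_le_div_of_nonneg_left hs (by positivity) (by linarith)
  have hsplit : exp (-s / (6 * t₀)) = exp (-(s / (12 * t₀))) * exp (-s / (12 * t₀)) := by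
    rw [← exp_add]
    ring_nf
  calc s / (4 * t ^ 2) * exp (-s / (4 * t)) ≤ s / t₀ ^ 2 * exp (-s / (6 * t₀)) :=
        mul_le_mul hfactor hexp (exp_pos _).le (by positivity)
    _ = 12 / t₀ * (s / (12 * t₀) * exp (-(s / (12 * t₀)))) * exp (-s / (12 * t₀)) := by
        rw [hsplit]
        field_simp
    _ ≤ 12 / t₀ * 1 * exp (-s / (12 * t₀)) := by
        gcongr
        exact (mul_exp_neg_le_exp_neg_one _).trans (by simp)
    _ = 12 / t₀ * exp (-s / (12 * t₀)) := by rw [mul_one]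

theorem hasDerivAt_integral_exp_neg_norm_sub_sq_div {E : Type*} [NormedAddCommGroup E]
    [MeasurableSpace E] [OpensMeasurableSpace E] {μ : Measure E} {x₀ : E}
    (hgauss : ∀ b > 0, Integrable (fun x => exp (-b * ‖x - x₀‖ ^ 2)) μ) {t₀ : ℝ} (ht₀ : 0 < t₀) :
    Integrable (fun x => ‖x - x₀‖ ^ 2 / (4 * t₀ ^ 2) * exp (-‖x - x₀‖ ^ 2 / (4 * t₀))) μ ∧
      HasDerivAt (fun t => ∫ x, exp (-‖x - x₀‖ ^ 2 / (4 * t)) ∂μ)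
        (∫ x, ‖x - x₀‖ ^ 2 / (4 * t₀ ^ 2) * exp (-‖x - x₀‖ ^ 2 / (4 * t₀)) ∂μ) t₀ := by
  have hgauss_div : ∀ c > 0, Integrable (fun x => exp (-‖x - x₀‖ ^ 2 / c)) μ := fun c hc =>
    (hgauss c⁻¹ (inv_pos.2 hc)).congr (ae_of_all _ fun x => by ring_nf)
  refine hasDerivAt_integral_of_dominated_loc_of_deriv_le
    (F := fun t x => exp (-‖x - x₀‖ ^ 2 / (4 * t)))
    (F' := fun t x => ‖x - x₀‖ ^ 2 / (4 * t ^ 2) * exp (-‖x - x₀‖ ^ 2 / (4 * t)))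
    (bound := fun x => 12 / t₀ * exp (-‖x - x₀‖ ^ 2 / (12 * t₀)))
    (ball_mem_nhds t₀ (half_pos ht₀))
    (.of_forall fun t => (by fun_prop : Continuous _).aestronglyMeasurable)
    (hgauss_div _ (by positivity)) (by fun_prop : Continuous _).aestronglyMeasurable
    (ae_of_all _ fun x t ht => ?_) ((hgauss_div _ (by positivity)).const_mul _)
    (ae_of_all _ fun x t ht => ?_)
  · rw [norm_of_nonneg (by positivity)]
    exact div_four_mul_sq_mul_exp_neg_div_le (by positivity) ht₀ ht
  · have : 0 < t := by
      rw [mem_ball, dist_eq] at ht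
      linarith [(abs_lt.1 ht).1]
    exact hasDerivAt_exp_neg_div_four_mul _ this.ne'

theorem hasDerivAt_mul_rpow {c t p : ℝ} (hc : 0 < c) (ht : 0 < t) :
    HasDerivAt (fun t => (c * t) ^ p) (p / t * (c * t) ^ p) t := by
  have h := ((hasDerivAt_id t).const_mul c).rpow_const (p := p) (Or.inl (by positivity))
  refine h.congr_deriv ?_
  rw [id, rpow_sub_one (by positivity)]
  field_simp

theorem F_time_derivative_general (n : ℕ) {E : Type*} [NormedAddCommGroup E]
    [InnerProductSpace ℝ E] [MeasurableSpace E] [BorelSpace E]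
    (μ : Measure E) (C d : ℝ) (hC : 0 < C) (hd : 0 ≤ d)
    (hgrowth : ∀ r : ℝ, 1 ≤ r → μ (Metric.closedBall 0 r) ≤ ENNReal.ofReal (C * r ^ d))
    (x₀ : E) :
    ∀ t₀ : ℝ, 0 < t₀ →
      HasDerivAt (fun t : ℝ => FmeasR n μ x₀ t)
        ((4 * Real.pi * t₀) ^ (-(n : ℝ) / 2) *
          ∫ x, (‖x - x₀‖ ^ 2 / (4 * t₀ ^ 2) - n / (2 * t₀)) *
            Real.exp (-‖x - x₀‖ ^ 2 / (4 * t₀)) ∂μ)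
        t₀ := by
  intro t₀ ht₀
  have hgauss : ∀ b > 0, Integrable (fun x => exp (-b * ‖x - x₀‖ ^ 2)) μ := fun b hb =>
    integrable_exp_neg_mul_norm_sub_sq hb
      (measure_closedBall_le_of_measure_closedBall_zero_le hC.le hd hgrowth x₀)
  have hkernel : Integrable (fun x => exp (-‖x - x₀‖ ^ 2 / (4 * t₀))) μ :=
    (hgauss (4 * t₀)⁻¹ (by positivity)).congr (ae_of_all _ fun x => by ring_nf)
  obtain ⟨hint, hderiv⟩ := hasDerivAt_integral_exp_neg_norm_sub_sq_div hgauss ht₀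
  refine ((hasDerivAt_mul_rpow (by positivity) ht₀).mul hderiv).congr_deriv ?_
  simp_rw [sub_mul]
  rw [integral_sub hint (hkernel.const_mul _), integral_const_mul]
  ring

/-- Variation of the `F`-functional in the time parameter: if `μ` has polynomial volume
growth, then for fixed `x₀` the function `t ↦ F^{(n)}_{x₀,t}(μ)` is differentiable on
`(0,∞)` with derivative at `t₀ > 0` equal to
`(4π t₀)^{-n/2} ∫ (‖x-x₀‖²/(4t₀²) - n/(2t₀)) exp(-‖x-x₀‖²/(4t₀)) dμ(x)`. -/
theorem F_time_derivative (n : ℕ) {E : Type*} [NormedAddCommGroup E]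
    [InnerProductSpace ℝ E] [FiniteDimensional ℝ E] [MeasurableSpace E] [BorelSpace E]
    (μ : Measure E) (C d : ℝ) (hC : 0 < C) (hd : 0 ≤ d)
    (hgrowth : ∀ r : ℝ, 1 ≤ r → μ (Metric.closedBall 0 r) ≤ ENNReal.ofReal (C * r ^ d))
    (x₀ : E) :
    ∀ t₀ : ℝ, 0 < t₀ →
      HasDerivAt (fun t : ℝ => FmeasR n μ x₀ t)
        ((4 * Real.pi * t₀) ^ (-(n : ℝ) / 2) *
          ∫ x, (‖x - x₀‖ ^ 2 / (4 * t₀ ^ 2) - n / (2 * t₀)) *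
            Real.exp (-‖x - x₀‖ ^ 2 / (4 * t₀)) ∂μ)
        t₀ :=
  F_time_derivative_general n μ C d hC hd hgrowth x₀
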